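/- Let |q| < 1, |ρ| < 1, x, y ∈ S(q), and let i, j, m ≥ 0 be integers. Then γ_{i,j}(x,y|ρ q^m, q) = Σ_{k=0}^{m} (-1)^k [m choose k]_q q^{k(k-1)/2} (1-q)^k ρ^k γ_{i+k,j+k}(x,y|ρ,q). -/

import Mathlib

/-!
Two finite identities drive the proof. First, for `k ≤ N`, `(1 - q)^k [N]_q! / [N-k]_q!` is the
product `∏_{j<k} (1 - q^(N-j))`, which vanishes for `k > N`; second, these products satisfy
`∑_{k ≤ m} (-1)^k [m choose k]_q q^(k(k-1)/2) ∏_{j<k} (1 - q^(N-j)) = q^(mN)`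
(induction on `m` via the q-Pascal rule). Hence the `N`-th term of the series for
`γ_{i,j}(x,y|ρq^m,q)` splits into `m + 1` pieces, and summing the `k`-th piece over `N` gives,
after the shift `N = n + k`, the series of `(1 - q)^k ρ^k γ_{i+k,j+k}(x,y|ρ,q)`.

Exchanging the finite sum with the series needs absolute convergence, i.e. the bound
`|H_n(x|q)| √(1-q)^n ≤ (n + 1) C` on `S(q)`. Writing `x √(1-q) = 2 cos θ`, the Rogers formula
`√(1-q)^n H_n(x|q) = ∑_k [n choose k]_q e^{i(n-2k)θ}` reduces it to a uniform bound on
q-binomial coefficients, which follows from `e^{-M} ≤ (1-q)^n [n]_q! ≤ e^M`,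
`M = |q| / (1 - |q|)^2`.
-/

open Finset MeasureTheory

noncomputable section

/-- [n]_q = 1 + q + ... + q^{n-1} -/
def qNat (q : ℝ) (n : ℕ) : ℝ := ∑ j ∈ Finset.range n, q ^ j

/-- [n]_q! -/
def qFact (q : ℝ) : ℕ → ℝ
  | 0 => 1
  | n + 1 => qFact q n * qNat q (n + 1)

/-- q-binomial coefficient -/
def qBinom (q : ℝ) (n k : ℕ) : ℝ :=
  if k ≤ n then qFact q n / (qFact q (n - k) * qFact q k) else 0

/-- q-Pochhammer symbol (a;q)_n -/
def qPoch (a q : ℝ) (n : ℕ) : ℝ := ∏ j ∈ Finset.range n, (1 - a * q ^ j)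

/-- q-Pochhammer symbol (a;q)_∞ -/
def qPochInf (a q : ℝ) : ℝ := ∏' j : ℕ, (1 - a * q ^ j)

/-- continuous q-Hermite polynomials H_n(x|q) -/
def qHermite (q : ℝ) : ℕ → ℝ → ℝ
  | 0, _ => 1
  | 1, x => x
  | n + 2, x => x * qHermite q (n + 1) x - qNat q (n + 1) * qHermite q n x

/-- big q-Hermite polynomials H_n(x|a,q) -/
def bigqHermite (q a : ℝ) : ℕ → ℝ → ℝ
  | 0, _ => 1
  | 1, x => x - a
  | n + 2, x => (x - a * q ^ (n + 1)) * bigqHermite q a (n + 1) x -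
      qNat q (n + 1) * bigqHermite q a n x

/-- rescaled Al-Salam--Chihara polynomials P_n(x|y,ρ,q) -/
def ascP (q y ρ : ℝ) : ℕ → ℝ → ℝ
  | 0, _ => 1
  | 1, x => x - ρ * y
  | n + 2, x => (x - ρ * y * q ^ (n + 1)) * ascP q y ρ (n + 1) x -
      qNat q (n + 1) * (1 - ρ ^ 2 * q ^ n) * ascP q y ρ n x

/-- generating function φ_H(x|t,q) of the q-Hermite polynomials -/
def phiH (q t x : ℝ) : ℝ := ∑' n : ℕ, t ^ n / qFact q n * qHermite q n x

/-- γ_{i,j}(x,y|ρ,q) -/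
def gammaPM (q ρ : ℝ) (i j : ℕ) (x y : ℝ) : ℝ :=
  ∑' n : ℕ, ρ ^ n / qFact q n * qHermite q (n + i) x * qHermite q (n + j) y

/-- the polynomials Q_{i,j}(x,y|ρ,q) -/
def Qpoly (q ρ : ℝ) (i j : ℕ) (x y : ℝ) : ℝ :=
  ∑ s ∈ Finset.range (j + 1),
    (-1 : ℝ) ^ s * q ^ (s * (s - 1) / 2) * qBinom q j s * ρ ^ s * qHermite q (j - s) y *
      ascP q y ρ (i + s) x / qPoch (ρ ^ 2) q (i + s)

/-- the interval S(q) = [-2/√(1-q), 2/√(1-q)] -/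
def Sq (q : ℝ) : Set ℝ := Set.Icc (-(2 / Real.sqrt (1 - q))) (2 / Real.sqrt (1 - q))

/-- ω(x,y|ρ) -/
def omegaPM (x y ρ : ℝ) : ℝ :=
  (1 - ρ ^ 2) ^ 2 - 4 * ρ * (1 + ρ ^ 2) * x * y + 4 * ρ ^ 2 * (x ^ 2 + y ^ 2)

/-- l(x|a) -/
def lPM (x a : ℝ) : ℝ := (1 + a) ^ 2 - 4 * a * x ^ 2

/-- the q-Normal density f_N(x|q) -/
def fN (q x : ℝ) : ℝ :=
  Real.sqrt ((1 - q) * (4 - (1 - q) * x ^ 2)) * qPochInf q q / (2 * Real.pi) *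
    ∏' j : ℕ, lPM (x * Real.sqrt (1 - q) / 2) (q ^ (j + 1))

/-- the (q,ρ)-Conditional Normal density f_CN(x|y,ρ,q) -/
def fCN (q ρ x y : ℝ) : ℝ :=
  fN q x * qPochInf (ρ ^ 2) q /
    ∏' j : ℕ, omegaPM (x * Real.sqrt (1 - q) / 2) (y * Real.sqrt (1 - q) / 2) (ρ * q ^ j)

/-- the (ρ,q)-bivariate Normal density f_{2D}(x,y|ρ,q) -/
def f2D (q ρ x y : ℝ) : ℝ := fCN q ρ x y * fN q y

variable {q : ℝ}

lemma one_sub_mul_qNat (n : ℕ) : (1 - q) * qNat q n = 1 - q ^ n := mul_neg_geom_sum q n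

lemma qNat_add (a b : ℕ) : qNat q (a + b) = qNat q a + q ^ a * qNat q b := by
  rw [qNat, qNat, qNat, sum_range_add, mul_sum]
  simp_rw [pow_add]

lemma abs_pow_succ_lt_one (hq : |q| < 1) (n : ℕ) : |q ^ (n + 1)| < 1 := by
  rw [abs_pow]
  exact pow_lt_one₀ (abs_nonneg q) hq n.succ_ne_zero

lemma qNat_pos (hq : |q| < 1) (n : ℕ) : 0 < qNat q (n + 1) := by
  have hq₁ : 0 < 1 - q := by linarith [(abs_lt.mp hq).2]
  have hqn : 0 < 1 - q ^ (n + 1) := by linarith [(abs_lt.mp (abs_pow_succ_lt_one hq n)).2]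
  rw [← one_sub_mul_qNat] at hqn
  exact pos_of_mul_pos_right hqn hq₁.le

lemma qFact_pos (hq : |q| < 1) (n : ℕ) : 0 < qFact q n := by
  induction n with
  | zero => exact one_pos
  | succ n ih => exact mul_pos ih (qNat_pos hq n)

lemma qFact_succ (n : ℕ) : qFact q (n + 1) = qFact q n * qNat q (n + 1) := rfl

lemma one_sub_pow_mul_qFact (n : ℕ) :
    (1 - q) ^ n * qFact q n = ∏ j ∈ range n, (1 - q ^ (j + 1)) := by
  induction n with
  | zero => simp [qFact]
  | succ n ih =>
    rw [prod_range_succ, ← ih, qFact_succ, ← one_sub_mul_qNat]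
    ring

lemma Real.exp_neg_div_one_sub_le {u : ℝ} (hu : u < 1) : Real.exp (-(u / (1 - u))) ≤ 1 - u := by
  have hu₁ : 0 < 1 - u := by linarith
  have h := Real.add_one_le_exp (u / (1 - u))
  rw [show u / (1 - u) + 1 = (1 - u)⁻¹ by field_simp; ring] at h
  rw [Real.exp_neg]
  exact (inv_le_comm₀ (Real.exp_pos _) hu₁).mpr h

lemma exp_neg_le_one_sub_pow_succ (hq : |q| < 1) (j : ℕ) :
    Real.exp (-(|q| ^ (j + 1) / (1 - |q|))) ≤ 1 - q ^ (j + 1) := by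
  have hu : |q| ^ (j + 1) < 1 := by rw [← abs_pow]; exact abs_pow_succ_lt_one hq j
  have hua : |q| ^ (j + 1) ≤ |q| := pow_le_of_le_one (abs_nonneg q) hq.le j.succ_ne_zero
  calc Real.exp (-(|q| ^ (j + 1) / (1 - |q|)))
      ≤ Real.exp (-(|q| ^ (j + 1) / (1 - |q| ^ (j + 1)))) := by
        gcongr
    _ ≤ 1 - |q| ^ (j + 1) := Real.exp_neg_div_one_sub_le hu
    _ ≤ 1 - q ^ (j + 1) := by rw [← abs_pow]; linarith [le_abs_self (q ^ (j + 1))]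

lemma one_sub_pow_succ_le_exp (hq : |q| < 1) (j : ℕ) :
    1 - q ^ (j + 1) ≤ Real.exp (|q| ^ (j + 1) / (1 - |q|)) := by
  have hq₁ : 0 < 1 - |q| := by linarith
  calc 1 - q ^ (j + 1) ≤ |q| ^ (j + 1) + 1 := by rw [← abs_pow]; linarith [neg_abs_le (q ^ (j + 1))]
    _ ≤ Real.exp (|q| ^ (j + 1)) := Real.add_one_le_exp _
    _ ≤ Real.exp (|q| ^ (j + 1) / (1 - |q|)) := by
        gcongr
        exact le_div_self (by positivity) hq₁ (by linarith [abs_nonneg q])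

lemma sum_abs_pow_succ_div_le (hq : |q| < 1) (n : ℕ) :
    ∑ j ∈ range n, |q| ^ (j + 1) / (1 - |q|) ≤ |q| / (1 - |q|) ^ 2 := by
  have hq₁ : 0 < 1 - |q| := by linarith
  have hgeom : ∑ j ∈ range n, |q| ^ j ≤ 1 / (1 - |q|) := by
    have h := geom_sum_Ico_le_of_lt_one (m := 0) (n := n) (abs_nonneg q) hq
    rwa [← range_eq_Ico, pow_zero] at h
  calc ∑ j ∈ range n, |q| ^ (j + 1) / (1 - |q|) = |q| * (∑ j ∈ range n, |q| ^ j) / (1 - |q|) := by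
        rw [← sum_div, mul_sum]
        exact congrArg (· / _) (sum_congr rfl fun j _ => pow_succ' _ _)
    _ ≤ |q| * (1 / (1 - |q|)) / (1 - |q|) := by gcongr
    _ = |q| / (1 - |q|) ^ 2 := by field_simp

lemma exp_neg_le_one_sub_pow_mul_qFact (hq : |q| < 1) (n : ℕ) :
    Real.exp (-(|q| / (1 - |q|) ^ 2)) ≤ (1 - q) ^ n * qFact q n := by
  rw [one_sub_pow_mul_qFact]
  calc Real.exp (-(|q| / (1 - |q|) ^ 2))
      ≤ Real.exp (-∑ j ∈ range n, |q| ^ (j + 1) / (1 - |q|)) := by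
        gcongr; exact sum_abs_pow_succ_div_le hq n
    _ = ∏ j ∈ range n, Real.exp (-(|q| ^ (j + 1) / (1 - |q|))) := by
        rw [← sum_neg_distrib, Real.exp_sum]
    _ ≤ ∏ j ∈ range n, (1 - q ^ (j + 1)) :=
        prod_le_prod (fun _ _ => (Real.exp_pos _).le) fun j _ => exp_neg_le_one_sub_pow_succ hq j

lemma one_sub_pow_mul_qFact_le_exp (hq : |q| < 1) (n : ℕ) :
    (1 - q) ^ n * qFact q n ≤ Real.exp (|q| / (1 - |q|) ^ 2) := by
  rw [one_sub_pow_mul_qFact]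
  calc ∏ j ∈ range n, (1 - q ^ (j + 1))
      ≤ ∏ j ∈ range n, Real.exp (|q| ^ (j + 1) / (1 - |q|)) :=
        prod_le_prod (fun j _ => by linarith [(abs_lt.mp (abs_pow_succ_lt_one hq j)).2])
          fun j _ => one_sub_pow_succ_le_exp hq j
    _ = Real.exp (∑ j ∈ range n, |q| ^ (j + 1) / (1 - |q|)) := (Real.exp_sum _ _).symm
    _ ≤ Real.exp (|q| / (1 - |q|) ^ 2) := by gcongr; exact sum_abs_pow_succ_div_le hq n

lemma qBinom_of_add_eq {n k d : ℕ} (h : k + d = n) :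
    qBinom q n k = qFact q n / (qFact q d * qFact q k) := by
  subst h
  rw [qBinom, if_pos (Nat.le_add_right k d), Nat.add_sub_cancel_left]

lemma qBinom_of_lt {n k : ℕ} (h : n < k) : qBinom q n k = 0 := if_neg (by omega)

lemma qBinom_zero_right (hq : |q| < 1) (n : ℕ) : qBinom q n 0 = 1 := by
  simp [qBinom, qFact, (qFact_pos hq n).ne']

lemma qBinom_self (hq : |q| < 1) (n : ℕ) : qBinom q n n = 1 := by
  simp [qBinom, qFact, (qFact_pos hq n).ne']

lemma qBinom_succ_succ (hq : |q| < 1) (n k : ℕ) :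
    qBinom q (n + 1) (k + 1) = q ^ (k + 1) * qBinom q n (k + 1) + qBinom q n k := by
  rcases lt_trichotomy k n with h | rfl | h
  · obtain ⟨b, rfl⟩ : ∃ b, n = k + b + 1 := ⟨n - k - 1, by omega⟩
    rw [qBinom_of_add_eq (d := b + 1) (by ring), qBinom_of_add_eq (d := b) (by ring),
      qBinom_of_add_eq (d := b + 1) (by ring), qFact_succ (k + b + 1), qFact_succ b, qFact_succ k,
      show k + b + 1 + 1 = (k + 1) + (b + 1) by ring, qNat_add]
    have := (qFact_pos hq (k + b + 1)).ne'
    have := (qFact_pos hq b).ne'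
    have := (qFact_pos hq k).ne'
    have := (qNat_pos hq b).ne'
    have := (qNat_pos hq k).ne'
    field_simp
    ring
  · rw [qBinom_self hq, qBinom_of_lt (by omega), qBinom_self hq]
    ring
  · rw [qBinom_of_lt h, qBinom_of_lt (by omega), qBinom_of_lt (by omega)]
    ring

lemma qBinom_succ_succ' (hq : |q| < 1) (n k : ℕ) :
    qBinom q (n + 1) (k + 1) = qBinom q n (k + 1) + q ^ (n - k) * qBinom q n k := by
  rcases lt_trichotomy k n with h | rfl | h
  · obtain ⟨b, rfl⟩ : ∃ b, n = k + b + 1 := ⟨n - k - 1, by omega⟩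
    rw [qBinom_of_add_eq (d := b + 1) (by ring), qBinom_of_add_eq (d := b) (by ring),
      qBinom_of_add_eq (d := b + 1) (by ring), qFact_succ (k + b + 1), qFact_succ b, qFact_succ k,
      show k + b + 1 + 1 = (b + 1) + (k + 1) by ring, qNat_add, show k + b + 1 - k = b + 1 by omega]
    have := (qFact_pos hq (k + b + 1)).ne'
    have := (qFact_pos hq b).ne'
    have := (qFact_pos hq k).ne'
    have := (qNat_pos hq b).ne'
    have := (qNat_pos hq k).ne'
    field_simp
  · rw [qBinom_self hq, qBinom_of_lt (by omega), qBinom_self hq, Nat.sub_self]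
    ring
  · rw [qBinom_of_lt h, qBinom_of_lt (by omega), qBinom_of_lt (by omega)]
    ring

lemma qBinom_add_two_succ (hq : |q| < 1) (n k : ℕ) :
    qBinom q (n + 2) (k + 1) =
      qBinom q (n + 1) (k + 1) + qBinom q (n + 1) k - (1 - q ^ (n + 1)) * qBinom q n k := by
  rw [qBinom_succ_succ' hq (n + 1) k]
  suffices q ^ (n + 1 - k) * qBinom q (n + 1) k =
      qBinom q (n + 1) k - (1 - q ^ (n + 1)) * qBinom q n k by linarith
  rcases k with _ | l
  · simp [qBinom_zero_right hq]
  rcases le_or_gt l n with h | h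
  · have hpow : q ^ (n - l) * q ^ (l + 1) = q ^ (n + 1) := by
      rw [← pow_add]
      congr 1
      omega
    rw [show n + 1 - (l + 1) = n - l by omega]
    linear_combination q ^ (n - l) * qBinom_succ_succ hq n l - qBinom_succ_succ' hq n l +
      qBinom q n (l + 1) * hpow
  · rw [qBinom_of_lt (by omega), qBinom_of_lt (by omega)]
    ring

lemma qBinom_nonneg (hq : |q| < 1) (n k : ℕ) : 0 ≤ qBinom q n k := by
  unfold qBinom
  split_ifs
  · exact div_nonneg (qFact_pos hq n).le (mul_pos (qFact_pos hq _) (qFact_pos hq k)).le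
  · exact le_rfl

lemma qBinom_le_exp (hq : |q| < 1) (n k : ℕ) :
    qBinom q n k ≤ Real.exp (3 * (|q| / (1 - |q|) ^ 2)) := by
  rcases le_or_gt k n with h | h
  · set M := |q| / (1 - |q|) ^ 2
    have hq₁ : 0 < 1 - q := by linarith [(abs_lt.mp hq).2]
    obtain ⟨d, rfl⟩ : ∃ d, n = k + d := ⟨n - k, by omega⟩
    have hfac : qBinom q (k + d) k = (1 - q) ^ (k + d) * qFact q (k + d) /
        (((1 - q) ^ d * qFact q d) * ((1 - q) ^ k * qFact q k)) := by
      rw [qBinom_of_add_eq (d := d) rfl]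
      have := (qFact_pos hq (k + d)).ne'
      have := (qFact_pos hq d).ne'
      have := (qFact_pos hq k).ne'
      field_simp
      ring
    calc qBinom q (k + d) k ≤ Real.exp M / (Real.exp (-M) * Real.exp (-M)) := by
          rw [hfac]
          exact div_le_div₀ (Real.exp_pos _).le (one_sub_pow_mul_qFact_le_exp hq _)
            (by positivity) (mul_le_mul (exp_neg_le_one_sub_pow_mul_qFact hq d)
              (exp_neg_le_one_sub_pow_mul_qFact hq k) (Real.exp_pos _).le
              (mul_pos (pow_pos hq₁ d) (qFact_pos hq d)).le)
      _ = Real.exp (3 * M) := by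
          rw [← Real.exp_add, ← Real.exp_sub]
          congr 1
          ring
  · rw [qBinom_of_lt h]
    exact (Real.exp_pos _).le

def qDescFactorial (q : ℝ) (N k : ℕ) : ℝ := ∏ j ∈ range k, (1 - q ^ (N - j))

lemma qDescFactorial_succ (N k : ℕ) :
    qDescFactorial q N (k + 1) = qDescFactorial q N k * (1 - q ^ (N - k)) :=
  prod_range_succ _ _

lemma qDescFactorial_of_lt {N k : ℕ} (h : N < k) : qDescFactorial q N k = 0 :=
  prod_eq_zero (mem_range.mpr h) (by rw [Nat.sub_self, pow_zero, sub_self])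

lemma one_sub_pow_mul_qFact_add (n k : ℕ) :
    (1 - q) ^ k * qFact q (n + k) = qDescFactorial q (n + k) k * qFact q n := by
  induction k with
  | zero => simp [qDescFactorial]
  | succ k ih =>
    have hdesc : qDescFactorial q (n + (k + 1)) (k + 1) =
        qDescFactorial q (n + k) k * (1 - q ^ (n + k + 1)) := by
      rw [qDescFactorial, prod_range_succ', qDescFactorial]
      congr 1
      exact prod_congr rfl fun j _ => by congr 2; omega
    rw [hdesc, ← add_assoc, qFact_succ, ← one_sub_mul_qNat]
    linear_combination ((1 - q) * qNat q (n + k + 1)) * ih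

lemma sum_qBinom_mul_qDescFactorial (hq : |q| < 1) (m N : ℕ) :
    ∑ k ∈ range (m + 1),
      (-1 : ℝ) ^ k * qBinom q m k * q ^ (k * (k - 1) / 2) * qDescFactorial q N k = q ^ (m * N) := by
  induction m with
  | zero => simp [qBinom_zero_right hq, qDescFactorial]
  | succ m ih =>
    set u : ℕ → ℝ := fun k =>
      (-1 : ℝ) ^ k * qBinom q m k * q ^ (k * (k - 1) / 2) * q ^ k * qDescFactorial q N k
    have hpascal : ∀ k ∈ range (m + 1),
        (-1 : ℝ) ^ (k + 1) * qBinom q (m + 1) (k + 1) * q ^ ((k + 1) * (k + 1 - 1) / 2) *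
          qDescFactorial q N (k + 1) = u (k + 1) - u k * (1 - q ^ (N - k)) := by
      intro k _
      simp only [u]
      rw [qBinom_succ_succ hq, Nat.triangle_succ, qDescFactorial_succ]
      ring
    have hshift : ∀ k ∈ range (m + 1), u k * q ^ (N - k) =
        q ^ N * ((-1 : ℝ) ^ k * qBinom q m k * q ^ (k * (k - 1) / 2) * qDescFactorial q N k) := by
      intro k _
      rcases le_or_gt k N with h | h
      · rw [← pow_sub_mul_pow q h]
        ring
      · simp only [u, qDescFactorial_of_lt h, mul_zero, zero_mul]
    have hu₀ : u 0 = 1 := by simp [u, qBinom_zero_right hq, qDescFactorial]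
    have hlast : u (m + 1) = 0 := by simp [u, qBinom_of_lt (Nat.lt_succ_self m)]
    calc ∑ k ∈ range (m + 1 + 1), (-1 : ℝ) ^ k * qBinom q (m + 1) k * q ^ (k * (k - 1) / 2) *
          qDescFactorial q N k
        = ∑ k ∈ range (m + 1), (u (k + 1) - u k * (1 - q ^ (N - k))) + u 0 := by
          rw [sum_range_succ', sum_congr rfl hpascal, hu₀]
          simp [qBinom_zero_right hq, qDescFactorial]
      _ = u (m + 1) + ∑ k ∈ range (m + 1), u k * q ^ (N - k) := by
          rw [sum_sub_distrib, sub_add_eq_add_sub, ← sum_range_succ', sum_range_succ]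
          simp only [mul_sub, mul_one, sum_sub_distrib]
          ring
      _ = q ^ ((m + 1) * N) := by
          rw [hlast, sum_congr rfl hshift, ← mul_sum, ih]
          ring

section qBinomSum

variable {R : Type*} [CommRing R] [Algebra ℝ R]

def qBinomSum (q : ℝ) (z w : R) (n : ℕ) : R :=
  ∑ p ∈ antidiagonal n, algebraMap ℝ R (qBinom q n p.2) * z ^ p.1 * w ^ p.2

lemma qBinomSum_add_two (hq : |q| < 1) {z w : R} (hzw : z * w = 1) (n : ℕ) :
    qBinomSum q z w (n + 2) = (z + w) * qBinomSum q z w (n + 1) -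
      algebraMap ℝ R (1 - q ^ (n + 1)) * qBinomSum q z w n := by
  have hz : z * qBinomSum q z w (n + 1) = z ^ (n + 2) + ∑ p ∈ antidiagonal (n + 1),
      algebraMap ℝ R (qBinom q (n + 1) (p.2 + 1)) * z ^ p.1 * w ^ (p.2 + 1) := by
    have h := Nat.sum_antidiagonal_succ (n := n + 1)
      (f := fun p => algebraMap ℝ R (qBinom q (n + 1) p.2) * z ^ p.1 * w ^ p.2)
    rw [Nat.sum_antidiagonal_succ', qBinom_of_lt (Nat.lt_succ_self _)] at h
    simp only [qBinom_zero_right hq, map_zero, map_one, zero_mul, zero_add, pow_zero,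
      mul_one, one_mul] at h
    rw [qBinomSum, mul_sum, h]
    exact sum_congr rfl fun p _ => by ring
  have hw : w * qBinomSum q z w (n + 1) = ∑ p ∈ antidiagonal (n + 1),
      algebraMap ℝ R (qBinom q (n + 1) p.2) * z ^ p.1 * w ^ (p.2 + 1) := by
    rw [qBinomSum, mul_sum]
    exact sum_congr rfl fun p _ => by ring
  have h0 : qBinomSum q z w n = ∑ p ∈ antidiagonal (n + 1),
      algebraMap ℝ R (qBinom q n p.2) * z ^ p.1 * w ^ (p.2 + 1) := by
    rw [Nat.sum_antidiagonal_succ, qBinom_of_lt (Nat.lt_succ_self _), map_zero, zero_mul,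
      zero_mul, zero_add, qBinomSum]
    refine sum_congr rfl fun p _ => ?_
    linear_combination (algebraMap ℝ R (qBinom q n p.2) * z ^ p.1 * w ^ p.2) * hzw.symm
  have hpascal : ∀ p ∈ antidiagonal (n + 1),
      algebraMap ℝ R (qBinom q (n + 2) (p.2 + 1)) * z ^ p.1 * w ^ (p.2 + 1) =
        algebraMap ℝ R (qBinom q (n + 1) (p.2 + 1)) * z ^ p.1 * w ^ (p.2 + 1) +
          algebraMap ℝ R (qBinom q (n + 1) p.2) * z ^ p.1 * w ^ (p.2 + 1) -
          algebraMap ℝ R (1 - q ^ (n + 1)) *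
            (algebraMap ℝ R (qBinom q n p.2) * z ^ p.1 * w ^ (p.2 + 1)) := by
    intro p _
    rw [qBinom_add_two_succ hq, map_sub, map_add, map_mul]
    ring
  rw [qBinomSum, Nat.sum_antidiagonal_succ', sum_congr rfl hpascal, sum_sub_distrib,
    sum_add_distrib, add_mul, hz, hw, h0, mul_sum, qBinom_zero_right hq]
  simp only [map_one, one_mul, pow_zero, mul_one]
  ring

lemma qBinomSum_eq_qHermite (hq : |q| < 1) {z w : R} (hzw : z * w = 1) {x : ℝ}
    (hsum : z + w = algebraMap ℝ R (x * √(1 - q))) (n : ℕ) :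
    qBinomSum q z w n = algebraMap ℝ R (√(1 - q) ^ n * qHermite q n x) := by
  induction n using Nat.twoStepInduction with
  | zero => simp [qBinomSum, qBinom_zero_right hq, qHermite]
  | one =>
    simp only [qBinomSum, Nat.sum_antidiagonal_succ, zero_add, qBinom_self hq, map_one, pow_zero,
      mul_one, pow_one, one_mul, HasAntidiagonal.antidiagonal_zero, sum_singleton,
      qBinom_zero_right hq, qHermite]
    rw [add_comm, hsum, mul_comm]
  | more n ih₀ ih₁ =>
    have hs : √(1 - q) ^ 2 = 1 - q := Real.sq_sqrt (by linarith [(abs_lt.mp hq).2])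
    rw [qBinomSum_add_two hq hzw, ih₀, ih₁, hsum, ← map_mul, ← map_mul, ← map_sub, qHermite,
      ← one_sub_mul_qNat]
    congr 1
    linear_combination (qNat q (n + 1) * qHermite q n x * √(1 - q) ^ n) * hs

end qBinomSum

lemma abs_qHermite_mul_le (hq : |q| < 1) {x : ℝ} (hx : x ∈ Sq q) (n : ℕ) :
    |qHermite q n x| * √(1 - q) ^ n ≤ (n + 1) * Real.exp (3 * (|q| / (1 - |q|) ^ 2)) := by
  have hs : 0 < √(1 - q) := Real.sqrt_pos.mpr (by linarith [(abs_lt.mp hq).2])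
  obtain ⟨hx₁, hx₂⟩ := hx
  have hc₁ : -1 ≤ x * √(1 - q) / 2 := by
    rw [neg_le, le_div_iff₀ hs] at hx₁; linarith
  have hc₂ : x * √(1 - q) / 2 ≤ 1 := by
    rw [le_div_iff₀ hs] at hx₂; linarith
  set θ := Real.arccos (x * √(1 - q) / 2)
  set z := Complex.exp (θ * Complex.I)
  set w := Complex.exp (-θ * Complex.I)
  have hzw : z * w = 1 := by
    rw [← Complex.exp_add, show (θ : ℂ) * Complex.I + -θ * Complex.I = 0 by ring, Complex.exp_zero]
  have hsum : z + w = algebraMap ℝ ℂ (x * √(1 - q)) := by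
    rw [← Complex.two_cos, ← Complex.ofReal_cos, Real.cos_arccos hc₁ hc₂, Complex.coe_algebraMap]
    push_cast
    ring
  have hz : ‖z‖ = 1 := Complex.norm_exp_ofReal_mul_I θ
  have hw : ‖w‖ = 1 := by
    simpa only [Complex.ofReal_neg] using Complex.norm_exp_ofReal_mul_I (-θ)
  calc |qHermite q n x| * √(1 - q) ^ n = ‖qBinomSum q z w n‖ := by
        rw [qBinomSum_eq_qHermite hq hzw hsum, Complex.coe_algebraMap, Complex.norm_real,
          Real.norm_eq_abs, abs_mul, abs_pow, abs_of_pos hs, mul_comm]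
    _ ≤ ∑ p ∈ antidiagonal n, ‖algebraMap ℝ ℂ (qBinom q n p.2) * z ^ p.1 * w ^ p.2‖ :=
        norm_sum_le _ _
    _ ≤ ∑ _p ∈ antidiagonal n, Real.exp (3 * (|q| / (1 - |q|) ^ 2)) := by
        refine sum_le_sum fun p _ => ?_
        rw [norm_mul, norm_mul, norm_pow, norm_pow, hz, hw, Complex.coe_algebraMap,
          Complex.norm_real, Real.norm_eq_abs, abs_of_nonneg (qBinom_nonneg hq n p.2)]
        simpa using qBinom_le_exp hq n p.2
    _ = (n + 1) * Real.exp (3 * (|q| / (1 - |q|) ^ 2)) := by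
        rw [sum_const, Nat.card_antidiagonal, nsmul_eq_mul]
        push_cast
        ring

lemma summable_add_mul_add_mul_geometric {r : ℝ} (hr : |r| < 1) (a b : ℝ) :
    Summable fun n : ℕ => ((n : ℝ) + a) * ((n : ℝ) + b) * r ^ n := by
  have hr' : ‖r‖ < 1 := by rwa [Real.norm_eq_abs]
  have h₀ := summable_pow_mul_geometric_of_norm_lt_one 0 hr'
  have h₁ := summable_pow_mul_geometric_of_norm_lt_one 1 hr'
  have h₂ := summable_pow_mul_geometric_of_norm_lt_one 2 hr'
  refine ((h₂.add (h₁.mul_left (a + b))).add (h₀.mul_left (a * b))).congr fun n => ?_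
  ring

lemma one_div_qFact_le (hq : |q| < 1) (n : ℕ) :
    1 / qFact q n ≤ Real.exp (|q| / (1 - |q|) ^ 2) * (1 - q) ^ n := by
  have h := exp_neg_le_one_sub_pow_mul_qFact hq n
  rw [Real.exp_neg, inv_le_iff_one_le_mul₀ (Real.exp_pos _)] at h
  rw [div_le_iff₀ (qFact_pos hq n)]
  linarith

lemma summable_gammaPM_term (hq : |q| < 1) {ρ x y : ℝ} (hρ : |ρ| < 1) (hx : x ∈ Sq q)
    (hy : y ∈ Sq q) (a b : ℕ) :
    Summable fun n : ℕ => ρ ^ n / qFact q n * qHermite q (n + a) x * qHermite q (n + b) y := by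
  set K := Real.exp (3 * (|q| / (1 - |q|) ^ 2))
  set s := √(1 - q)
  have hs : 0 < s := Real.sqrt_pos.mpr (by linarith [(abs_lt.mp hq).2])
  have hs₂ : s ^ 2 = 1 - q := Real.sq_sqrt (by linarith [(abs_lt.mp hq).2])
  have hbound : ∀ n : ℕ, ‖ρ ^ n / qFact q n * qHermite q (n + a) x * qHermite q (n + b) y‖ ≤
      Real.exp (|q| / (1 - |q|) ^ 2) * K ^ 2 / s ^ (a + b) *
        (((n : ℝ) + (a + 1)) * ((n : ℝ) + (b + 1)) * |ρ| ^ n) := by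
    intro n
    have hHa := abs_qHermite_mul_le hq hx (n + a)
    have hHb := abs_qHermite_mul_le hq hy (n + b)
    have hfact : 1 / qFact q n ≤ Real.exp (|q| / (1 - |q|) ^ 2) * (s ^ 2) ^ n :=
      hs₂ ▸ one_div_qFact_le hq n
    calc ‖ρ ^ n / qFact q n * qHermite q (n + a) x * qHermite q (n + b) y‖
        = |ρ| ^ n * (1 / qFact q n) * (|qHermite q (n + a) x| * s ^ (n + a)) *
            (|qHermite q (n + b) y| * s ^ (n + b)) / (s ^ (n + a) * s ^ (n + b)) := by
          rw [Real.norm_eq_abs, abs_mul, abs_mul, abs_div, abs_pow, abs_of_pos (qFact_pos hq n)]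
          field_simp
      _ ≤ |ρ| ^ n * (Real.exp (|q| / (1 - |q|) ^ 2) * (s ^ 2) ^ n) * ((↑(n + a) + 1) * K) *
            ((↑(n + b) + 1) * K) / (s ^ (n + a) * s ^ (n + b)) := by
          gcongr
      _ = _ := by
          field_simp
          push_cast
          ring
  refine Summable.of_norm_bounded ((summable_add_mul_add_mul_geometric ?_ _ _).mul_left _) hbound
  rwa [abs_abs]

lemma hasSum_qDescFactorial_mul (hq : |q| < 1) {ρ x y : ℝ} (hρ : |ρ| < 1) (hx : x ∈ Sq q)
    (hy : y ∈ Sq q) (i j k : ℕ) :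
    HasSum (fun N => qDescFactorial q N k *
        (ρ ^ N / qFact q N * qHermite q (N + i) x * qHermite q (N + j) y))
      ((1 - q) ^ k * ρ ^ k * gammaPM q ρ (i + k) (j + k) x y) := by
  rw [← hasSum_nat_add_iff' k, sum_eq_zero fun N hN => by
    rw [qDescFactorial_of_lt (mem_range.mp hN), zero_mul], sub_zero, gammaPM]
  refine ((summable_gammaPM_term hq hρ hx hy (i + k) (j + k)).hasSum.mul_left
    ((1 - q) ^ k * ρ ^ k)).congr_fun fun n => ?_
  have := (qFact_pos hq n).ne'
  have := (qFact_pos hq (n + k)).ne'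
  have hdesc : qDescFactorial q (n + k) k = (1 - q) ^ k * qFact q (n + k) / qFact q n := by
    rw [one_sub_pow_mul_qFact_add]
    field_simp
  rw [hdesc, show n + k + i = n + (i + k) by ring, show n + k + j = n + (j + k) by ring]
  field_simp
  ring

/-- γ_{i,j}(x,y|ρ q^m, q) = Σ_{k=0}^m (-1)^k [m choose k]_q q^{k(k-1)/2}
(1-q)^k ρ^k γ_{i+k,j+k}(x,y|ρ,q). -/
theorem statement2 (q ρ x y : ℝ) (hq : |q| < 1) (hρ : |ρ| < 1)
    (hx : x ∈ Sq q) (hy : y ∈ Sq q) (i j m : ℕ) :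
    gammaPM q (ρ * q ^ m) i j x y =
      ∑ k ∈ Finset.range (m + 1),
        (-1 : ℝ) ^ k * qBinom q m k * q ^ (k * (k - 1) / 2) * (1 - q) ^ k * ρ ^ k *
          gammaPM q ρ (i + k) (j + k) x y := by
  have hterm : ∀ N, (ρ * q ^ m) ^ N / qFact q N * qHermite q (N + i) x * qHermite q (N + j) y =
      ∑ k ∈ range (m + 1), (-1 : ℝ) ^ k * qBinom q m k * q ^ (k * (k - 1) / 2) *
        (qDescFactorial q N k * (ρ ^ N / qFact q N * qHermite q (N + i) x * qHermite q (N + j) y)) := by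
    intro N
    simp_rw [← mul_assoc, ← sum_mul, sum_qBinom_mul_qDescFactorial hq m N]
    ring
  have hsum := hasSum_sum fun k (_ : k ∈ range (m + 1)) =>
    (hasSum_qDescFactorial_mul hq hρ hx hy i j k).mul_left
      ((-1 : ℝ) ^ k * qBinom q m k * q ^ (k * (k - 1) / 2))
  rw [gammaPM, tsum_congr hterm, hsum.tsum_eq]
  exact sum_congr rfl fun k _ => by ring
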